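/- If f: {0,1}^n → {0,1} is non-constant then the unitary C_f defined by C_f|x,y⟩ = e^{iπ(1-2y)f(x)/4}|x,y⟩ cannot be written as a tensor product U ⊗ V of a unitary U on the first n qubits and a unitary V on the last qubit. -/

import Mathlib

/-!
The entries of a Kronecker product `U ⊗ V` satisfy the rank-one identity
`M (x,y) M (x',y') = M (x,y') M (x',y)`. On the diagonal of `C_f`, with `f z₁ = 1` and
`f z₂ = 0`, the two sides are `e^{iπ/4} · 1` and `e^{-iπ/4} · 1`, which differ.
-/

open Complex Matrix Kronecker

noncomputable section

/-- The diagonal unitary `C_f` on `n+1` qubits. -/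
def Cf (n : ℕ) (f : (Fin n → Bool) → Bool) :
    Matrix ((Fin n → Bool) × Bool) ((Fin n → Bool) × Bool) ℂ :=
  Matrix.diagonal fun p =>
    Complex.exp (Complex.I * (Real.pi / 4) * (1 - 2 * (if p.2 then 1 else 0)) *
      (if f p.1 then 1 else 0))

theorem Matrix.kronecker_apply_mul_kronecker_apply_swap {R ι ι' κ κ' : Type*}
    [CommMonoid R] (A : Matrix ι ι' R) (B : Matrix κ κ' R) (i i' : ι) (j j' : ι') (k k' : κ)
    (l l' : κ') :
    (A ⊗ₖ B) (i, k) (j, l) * (A ⊗ₖ B) (i', k') (j', l') =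
      (A ⊗ₖ B) (i, k') (j, l') * (A ⊗ₖ B) (i', k) (j', l) := by
  simp only [kroneckerMap_apply]
  ac_rfl

namespace Cf

variable {n : ℕ} {f : (Fin n → Bool) → Bool} {x : Fin n → Bool}

theorem apply_diag_of_eq_false (hx : f x = false) (y : Bool) : Cf n f (x, y) (x, y) = 1 := by
  simp [Cf, hx]

theorem apply_diag_false_of_eq_true (hx : f x = true) :
    Cf n f (x, false) (x, false) = exp (↑(Real.pi / 4) * I) := by
  simp only [Cf, diagonal_apply_eq, hx]
  push_cast
  ring_nf

theorem apply_diag_true_of_eq_true (hx : f x = true) :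
    Cf n f (x, true) (x, true) = exp (↑(-(Real.pi / 4)) * I) := by
  simp only [Cf, diagonal_apply_eq, hx]
  push_cast
  ring_nf

end Cf

theorem Complex.exp_pi_div_four_mul_I_ne_exp_neg :
    exp (↑(Real.pi / 4) * I) ≠ exp (↑(-(Real.pi / 4)) * I) := by
  intro h
  have him := congrArg Complex.im h
  rw [exp_ofReal_mul_I_im, exp_ofReal_mul_I_im, Real.sin_neg, Real.sin_pi_div_four] at him
  have : 0 < √2 := by positivity
  linarith

/-- If `f` is non-constant, then `C_f` is not a tensor product `U ⊗ V` of a unitary on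
the first `n` qubits and a unitary on the last qubit. -/
theorem Cf_not_tensor_product (n : ℕ) (f : (Fin n → Bool) → Bool)
    (z₁ z₂ : Fin n → Bool) (h₁ : f z₁ = true) (h₂ : f z₂ = false) :
    ∀ (U : Matrix (Fin n → Bool) (Fin n → Bool) ℂ) (V : Matrix Bool Bool ℂ),
      Uᴴ * U = 1 → Vᴴ * V = 1 → Cf n f ≠ U ⊗ₖ V := by
  intro U V _ _ hUV
  have hswap := kronecker_apply_mul_kronecker_apply_swap U V z₁ z₂ z₁ z₂ false true false true
  rw [← hUV, Cf.apply_diag_false_of_eq_true h₁, Cf.apply_diag_true_of_eq_true h₁,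
    Cf.apply_diag_of_eq_false h₂, Cf.apply_diag_of_eq_false h₂, mul_one, mul_one] at hswap
  exact exp_pi_div_four_mul_I_ne_exp_neg hswap
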